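/- arXiv:1010.4643 — 2 statements merged into one kernel-verified Lean document; each statement's English description precedes it below -/
import Mathlib

section
/- The Thue-Morse sequence is cube-free in the strong sense: if w = w₁…w_n is a nonempty word, then the word w w w₁ does not occur as a factor of the Thue-Morse fixed point ρ₀. -/
open Filter Topology MeasureTheory

/-- The left shift on the full 2-shift `Σ = {0,1}^ℕ`. -/
def shift (x : ℕ → Bool) : ℕ → Bool := fun n => x (n + 1)

/-- The Thue–Morse substitution `H : 0 → 01, 1 → 10`, acting on sequences. -/
def subH (x : ℕ → Bool) : ℕ → Bool :=
  fun n => if n % 2 = 0 then x (n / 2) else !x (n / 2)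

/-- The Thue–Morse sequence: `tm n` is the parity of the number of 1s in
the binary expansion of `n`. -/
def tm (n : ℕ) : Bool := (Nat.digits 2 n).count 1 % 2 == 1

/-- The fixed point of `subH` starting with 0. -/
def rho0 : ℕ → Bool := tm

/-- The fixed point of `subH` starting with 1. -/
def rho1 : ℕ → Bool := fun n => !tm n

/-- `rhoB b` is the fixed point of `subH` starting with digit `b`. -/
def rhoB : Bool → ℕ → Bool
  | false => rho0
  | true => rho1

/-- The digit-flipping involution. -/
def flipSeq (x : ℕ → Bool) : ℕ → Bool := fun n => !x n

/-- Prepend a digit to a sequence. -/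
def consTM (a : Bool) (x : ℕ → Bool) : ℕ → Bool
  | 0 => a
  | n + 1 => x n

/-- The Thue–Morse subshift: the closure of the shift orbit of `rho0`. -/
def TMK : Set (ℕ → Bool) := closure {y | ∃ n, y = shift^[n] rho0}

/-- The renormalization operator `𝓡V = V ∘ σ ∘ H + V ∘ H`. -/
def RenOp (V : (ℕ → Bool) → ℝ) : (ℕ → Bool) → ℝ :=
  fun x => V (shift (subH x)) + V (subH x)

/-- The Birkhoff sum `S_k V = ∑_{i<k} V ∘ σⁱ`. -/
def birkhoff (V : (ℕ → Bool) → ℝ) (k : ℕ) (x : ℕ → Bool) : ℝ :=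
  ∑ i ∈ Finset.range k, V (shift^[i] x)

/-- The potential `U_c`: value `c` on `[01]`, `-c` on `[10]`, `0` on `[00] ∪ [11]`. -/
def Upot (c : ℝ) (x : ℕ → Bool) : ℝ :=
  if x 0 = false ∧ x 1 = true then c
  else if x 0 = true ∧ x 1 = false then -c else 0

/-- The sliding block code `π(x)_k = 1` iff `x_k ≠ x_{k+1}`. -/
def piTM (x : ℕ → Bool) : ℕ → Bool := fun n => x n != x (n + 1)

/-- The Feigenbaum substitution `0 → 11, 1 → 10`, acting on sequences. -/
def subHfeig (x : ℕ → Bool) : ℕ → Bool :=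
  fun n => if n % 2 = 0 then true else !x (n / 2)

/-!
In `ρ₀` the letters at `2a` and `2a + 1` are `ρ₀(a)` and its complement, so `ρ₀` has no three equal
consecutive letters. An overlap of even period `2m` halves to an overlap of period `m` starting at
`k / 2`. An overlap of odd period `n ≥ 3` copies the two boundaries `2e | 2e + 1`, `2e + 2 | 2e + 3`
(which carry different letters) onto two boundaries `2b + 1 | 2b + 2`, `2b + 3 | 2b + 4` (or
conversely), which forces `ρ₀(b) = ρ₀(b + 1) = ρ₀(b + 2)`; period `1` is three equal letters
outright. By descent on the period `ρ₀` is overlap-free, and `w w w₁` is an overlap of period `|w|`.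
-/

/-- The factor `x[k, k + 2n]` has period `n`: it is an overlap `a v a v a` with `|a v| = n`. -/
def IsOverlap {α : Type*} (x : ℕ → α) (k n : ℕ) : Prop :=
  ∀ p, k ≤ p → p ≤ k + n → x p = x (p + n)

lemma tm_two_mul (a : ℕ) : tm (2 * a) = tm a := by
  rcases Nat.eq_zero_or_pos a with rfl | ha
  · rfl
  · simp [tm, Nat.digits_def' one_lt_two (by omega : 0 < 2 * a)]

lemma tm_two_mul_add_one (a : ℕ) : tm (2 * a + 1) = !tm a := by
  unfold tm
  rw [Nat.digits_def' one_lt_two (by omega), show (2 * a + 1) % 2 = 1 by omega,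
    show (2 * a + 1) / 2 = a by omega, List.count_cons_self]
  rcases Nat.mod_two_eq_zero_or_one ((Nat.digits 2 a).count 1) with h | h <;> simp [Nat.add_mod, h]

lemma tm_two_mul_add_eq_iff {r : ℕ} (hr : r < 2) (a b : ℕ) :
    tm (2 * a + r) = tm (2 * b + r) ↔ tm a = tm b := by
  interval_cases r <;> simp [tm_two_mul, tm_two_mul_add_one]

lemma tm_two_mul_ne_succ (a : ℕ) : tm (2 * a) ≠ tm (2 * a + 1) := by
  simp [tm_two_mul, tm_two_mul_add_one]

lemma tm_not_three_eq (b : ℕ) : ¬ (tm b = tm (b + 1) ∧ tm (b + 1) = tm (b + 2)) := by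
  rintro ⟨h₁, h₂⟩
  rcases Nat.even_or_odd' b with ⟨c, rfl | rfl⟩
  · exact tm_two_mul_ne_succ c h₁
  · exact tm_two_mul_ne_succ (c + 1) (by convert h₂ using 2 <;> omega)

lemma tm_eq_succ_of_two_mul_eq {e b : ℕ} (h₀ : tm (2 * e) = tm (2 * b + 1))
    (h₁ : tm (2 * e + 1) = tm (2 * b + 2)) : tm b = tm (b + 1) := by
  have hne := tm_two_mul_ne_succ e
  rw [h₀, h₁, show 2 * b + 2 = 2 * (b + 1) by ring, tm_two_mul_add_one, tm_two_mul] at hne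
  simpa using hne

lemma IsOverlap.half {k m : ℕ} (h : IsOverlap tm k (2 * m)) : IsOverlap tm (k / 2) m := by
  intro x hx₁ hx₂
  obtain ⟨r, hr, hkr, hrk⟩ : ∃ r < 2, k ≤ 2 * x + r ∧ 2 * x + r ≤ k + 2 * m := by
    rcases Nat.lt_or_ge (2 * x) k with hx | hx
    exacts [⟨1, by omega, by omega, by omega⟩, ⟨0, by omega, by omega, by omega⟩]
  have := h _ hkr hrk
  rwa [show 2 * x + r + 2 * m = 2 * (x + m) + r by ring, tm_two_mul_add_eq_iff hr] at this

lemma tm_not_isOverlap_odd {k m : ℕ} (hm : 0 < m) : ¬ IsOverlap tm k (2 * m + 1) := by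
  intro h
  have h' : ∀ i ≤ 3, ∀ p q, k + i = p → k + i + (2 * m + 1) = q → tm p = tm q := by
    rintro i hi _ _ rfl rfl
    exact h _ (by omega) (by omega)
  rcases Nat.even_or_odd' k with ⟨c, rfl | rfl⟩
  · refine tm_not_three_eq (c + m) ⟨?_, ?_⟩
    · exact tm_eq_succ_of_two_mul_eq (e := c)
        (h' 0 (by omega) _ _ (by omega) (by omega)) (h' 1 (by omega) _ _ (by omega) (by omega))
    · exact tm_eq_succ_of_two_mul_eq (e := c + 1)
        (h' 2 (by omega) _ _ (by omega) (by omega)) (h' 3 (by omega) _ _ (by omega) (by omega))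
  · refine tm_not_three_eq c ⟨?_, ?_⟩
    · exact tm_eq_succ_of_two_mul_eq (e := c + m + 1)
        (h' 0 (by omega) _ _ (by omega) (by omega)).symm
        (h' 1 (by omega) _ _ (by omega) (by omega)).symm
    · exact tm_eq_succ_of_two_mul_eq (e := c + m + 2)
        (h' 2 (by omega) _ _ (by omega) (by omega)).symm
        (h' 3 (by omega) _ _ (by omega) (by omega)).symm

theorem tm_not_isOverlap (k n : ℕ) (hn : 0 < n) : ¬ IsOverlap tm k n := by
  induction n using Nat.strong_induction_on generalizing k with
  | _ n ih =>
    intro h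
    rcases Nat.even_or_odd' n with ⟨m, rfl | rfl⟩
    · exact ih m (by omega) (k / 2) (by omega) h.half
    · rcases Nat.eq_zero_or_pos m with rfl | hm
      · exact tm_not_three_eq k ⟨h k le_rfl (by omega), h (k + 1) (by omega) le_rfl⟩
      · exact tm_not_isOverlap_odd hm h

lemma getD_append_append_take_one {α : Type*} (w : List α) (hw : w ≠ []) (d : α) {i : ℕ}
    (hi : i ≤ w.length) :
    (w ++ w ++ w.take 1).getD (i + w.length) d = (w ++ w ++ w.take 1).getD i d := by
  have hprefix : (w ++ w ++ w.take 1).take (w.length + 1) = w ++ w.take 1 := by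
    rw [List.append_assoc, List.take_length_add_append,
      List.take_append_of_le_length (List.length_pos_iff.mpr hw)]
  rw [List.append_assoc, List.getD_append_right _ _ _ _ (by omega), Nat.add_sub_cancel,
    ← List.append_assoc, ← hprefix]
  simp only [List.getD_eq_getElem?_getD, List.getElem?_take]
  rw [if_pos (by omega)]

/-- the Thue–Morse sequence is strongly cube-free: for a nonempty
word `w`, the word `w w w₁` never occurs as a factor of `ρ₀`. -/
theorem stmt4 (w : List Bool) (hw : w ≠ []) (k : ℕ) :
    ¬ (∀ i < 2 * w.length + 1, rho0 (k + i) = (w ++ w ++ w.take 1).getD i false) := by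
  intro h
  refine tm_not_isOverlap k w.length (List.length_pos_iff.mpr hw) fun p hkp hpk => ?_
  obtain ⟨i, rfl⟩ := Nat.exists_eq_add_of_le hkp
  change rho0 _ = rho0 _
  rw [Nat.add_assoc, h _ (by omega), h _ (by omega),
    getD_append_append_take_one w hw false (by omega)]
end

section
/- If W : 𝕂 → ℝ is a continuous fixed point of 𝓡 on 𝕂, then for i, j ∈ {0,1}: W(i·ρ_j) = W(i·ī·ρ_j) + W(ī·ρ_j); consequently W(01ρ_j) + W(10ρ_j) = 0. -/
open Filter Topology MeasureTheory

/-!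
Since `H(a·x) = a·ā·H(x)` and `H(ρ_j) = ρ_j`, the fixed-point equation at the point `i·ρ_j` of `𝕂`
reads `W(i·ρ_j) = W(i·ī·ρ_j) + W(ī·ρ_j)`. Adding the two instances `i = 0` and `i = 1` cancels
`W(0·ρ_j) + W(1·ρ_j)` and leaves `W(01ρ_j) + W(10ρ_j) = 0`. That `i·ρ_j ∈ 𝕂` follows from the
self-similarity `tm (a·2^m + b) = tm a xor tm b` for `b < 2^m`: every prefix of `i·ρ_j` occurs in `ρ₀`.
-/

lemma tm_two_mul_add (n : ℕ) {r : ℕ} (hr : r < 2) : tm (2 * n + r) = xor (tm n) (tm r) := by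
  rcases Nat.eq_zero_or_pos (2 * n + r) with h | h
  · obtain ⟨rfl, rfl⟩ : n = 0 ∧ r = 0 := by omega
    rfl
  · unfold tm
    rw [Nat.digits_def' (by norm_num) h, show (2 * n + r) % 2 = r by omega,
      show (2 * n + r) / 2 = n by omega]
    interval_cases r <;>
      rcases Nat.mod_two_eq_zero_or_one ((Nat.digits 2 n).count 1) with hc | hc <;> simp [Nat.add_mod, hc]

lemma tm_eq_xor_div_two_mod_two (n : ℕ) : tm n = xor (tm (n / 2)) (tm (n % 2)) := by
  conv_lhs => rw [← Nat.div_add_mod n 2]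
  exact tm_two_mul_add _ (Nat.mod_lt n two_pos)

lemma tm_mul_two_pow_add :
    ∀ (m a : ℕ) {b : ℕ}, b < 2 ^ m → tm (a * 2 ^ m + b) = xor (tm a) (tm b)
  | 0, a, b, hb => by
    obtain rfl : b = 0 := by omega
    simp [show tm 0 = false by rfl]
  | m + 1, a, b, hb => by
    have hsplit : a * 2 ^ (m + 1) + b = 2 * (a * 2 ^ m + b / 2) + b % 2 := by
      rw [pow_succ, ← mul_assoc]; omega
    rw [hsplit, tm_two_mul_add _ (Nat.mod_lt b two_pos),
      tm_mul_two_pow_add m a (by rw [pow_succ] at hb; omega), tm_eq_xor_div_two_mod_two b,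
      Bool.xor_assoc]

lemma exists_tm_eq_and_tm_succ_eq (a b : Bool) : ∃ k, tm k = a ∧ tm (k + 1) = b := by
  cases a <;> cases b
  exacts [⟨5, by decide, by decide⟩, ⟨0, by decide, by decide⟩,
    ⟨2, by decide, by decide⟩, ⟨1, by decide, by decide⟩]

lemma rhoB_apply (j : Bool) (n : ℕ) : rhoB j n = xor j (tm n) := by
  cases j <;> simp [rhoB, rho0, rho1]

lemma subH_rhoB (j : Bool) : subH (rhoB j) = rhoB j := by
  funext n
  rw [subH, rhoB_apply, rhoB_apply, tm_eq_xor_div_two_mod_two n]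
  rcases Nat.mod_two_eq_zero_or_one n with h | h <;>
    simp [h, show tm 0 = false by rfl, show tm 1 = true by decide]

lemma subH_consTM (a : Bool) (x : ℕ → Bool) :
    subH (consTM a x) = consTM a (consTM (!a) (subH x)) := by
  funext n
  match n with
  | 0 => rfl
  | 1 => rfl
  | n + 2 =>
    show subH (consTM a x) (n + 2) = subH x n
    simp only [subH, Nat.add_mod_right, show (n + 2) / 2 = n / 2 + 1 by omega]
    rfl

lemma shift_consTM (a : Bool) (x : ℕ → Bool) : shift (consTM a x) = x := rfl

lemma shift_iterate_apply (n : ℕ) (x : ℕ → Bool) (t : ℕ) : shift^[n] x t = x (t + n) := by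
  induction n generalizing x with
  | zero => rfl
  | succ n ih => rw [Function.iterate_succ_apply, ih]; rfl

lemma mem_TMK_of_forall_prefix {x : ℕ → Bool} (h : ∀ m, ∃ n, ∀ t < m, x t = rho0 (t + n)) :
    x ∈ TMK := by
  choose n hn using h
  refine mem_closure_of_tendsto (f := fun m => shift^[n m] rho0) (b := atTop) ?_
    (Eventually.of_forall fun m => ⟨n m, rfl⟩)
  refine tendsto_pi_nhds.2 fun t => tendsto_const_nhds.congr' ?_
  filter_upwards [eventually_gt_atTop t] with m hm
  rw [shift_iterate_apply, hn m t hm]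

/-- The prefix of length `m` is read off `ρ₀` at position `k·2^m + (2^m - 1)`, where the digits
`tm k`, `tm (k + 1)` are chosen so that this position carries `i` and the next block is `ρ_j`. -/
lemma consTM_rhoB_mem_TMK (i j : Bool) : consTM i (rhoB j) ∈ TMK := by
  refine mem_TMK_of_forall_prefix fun m => ?_
  obtain ⟨k, hk, hk1⟩ := exists_tm_eq_and_tm_succ_eq (xor i (tm (2 ^ m - 1))) j
  have hpos : 1 ≤ 2 ^ m := Nat.one_le_two_pow
  refine ⟨k * 2 ^ m + (2 ^ m - 1), fun t ht => ?_⟩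
  have ht' : t < 2 ^ m := ht.trans Nat.lt_two_pow_self
  cases t with
  | zero =>
    rw [rho0, Nat.zero_add, tm_mul_two_pow_add m k (by omega), hk, Bool.xor_assoc,
      Bool.xor_self, Bool.xor_false]
    rfl
  | succ s =>
    have hidx : s + 1 + (k * 2 ^ m + (2 ^ m - 1)) = (k + 1) * 2 ^ m + s := by
      rw [Nat.succ_mul]; omega
    rw [rho0, hidx, tm_mul_two_pow_add m (k + 1) (by omega), hk1, ← rhoB_apply]
    rfl

theorem stmt10_general (W : (ℕ → Bool) → ℝ)
    (hfix : ∀ x ∈ TMK, W x = W (subH x) + W (shift (subH x))) :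
    (∀ i j : Bool, W (consTM i (rhoB j)) =
      W (consTM i (consTM (!i) (rhoB j))) + W (consTM (!i) (rhoB j))) ∧
    (∀ j : Bool, W (consTM false (consTM true (rhoB j))) +
      W (consTM true (consTM false (rhoB j))) = 0) := by
  have hcons : ∀ i j : Bool, W (consTM i (rhoB j)) =
      W (consTM i (consTM (!i) (rhoB j))) + W (consTM (!i) (rhoB j)) := fun i j => by
    simpa only [subH_consTM, subH_rhoB, shift_consTM] using hfix _ (consTM_rhoB_mem_TMK i j)
  refine ⟨hcons, fun j => ?_⟩
  have h0 := hcons false j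
  have h1 := hcons true j
  rw [Bool.not_false] at h0
  rw [Bool.not_true] at h1
  linarith

/-- a continuous fixed point `W` of `𝓡` on `𝕂` satisfies
`W(i·ρ_j) = W(i·ī·ρ_j) + W(ī·ρ_j)` and `W(01ρ_j) + W(10ρ_j) = 0`. -/
theorem stmt10 (W : (ℕ → Bool) → ℝ) (hW : ContinuousOn W TMK)
    (hfix : ∀ x ∈ TMK, W x = W (subH x) + W (shift (subH x))) :
    (∀ i j : Bool, W (consTM i (rhoB j)) =
      W (consTM i (consTM (!i) (rhoB j))) + W (consTM (!i) (rhoB j))) ∧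
    (∀ j : Bool, W (consTM false (consTM true (rhoB j))) +
      W (consTM true (consTM false (rhoB j))) = 0) :=
  stmt10_general W hfix
end
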